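/- Let R be a commutative F-algebra admitting two well agreeing near weights ρ and σ, so that R is an integral domain, and let K be its field of fractions. Then the transcendence degree of K over F is one; equivalently, the Krull dimension of R is one. -/

import Mathlib

structure NearWeight (F R : Type*) [Field F] [CommRing R] [Algebra F R] where
  w : R → WithBot ℕ
  N0 : ∀ f : R, w f = ⊥ ↔ f = 0
  N1 : ∀ (c : F) (f : R), c ≠ 0 → w (c • f) = w f
  N2 : ∀ f g : R, w (f + g) ≤ max (w f) (w g)
  N3 : ∀ f g h : R, w f < w g → w (f * h) ≤ w (g * h)
  N3' : ∀ f g h : R, w f < w g → w 1 < w h → w (f * h) < w (g * h)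
  N4 : ∀ f g : R, w 1 < w f → w 1 < w g → w f = w g →
      ∃ c : F, c ≠ 0 ∧ w (f - c • g) < w f
  N5 : ∀ f g : R, w (f * g) ≤ w f + w g
  N5' : ∀ f g : R, w 1 < w f → w 1 < w g → w (f * g) = w f + w g
  norm0 : ∀ f : R, f ≠ 0 → w f ≤ w 1 → w f = 0
  normgcd : ∀ d : ℕ, (∀ f : R, w 1 < w f → ∃ k : ℕ, w f = ((d * k : ℕ) : WithBot ℕ)) → d = 1

namespace NearWeight

variable {F R : Type*} [Field F] [CommRing R] [Algebra F R]

def U (ρ : NearWeight F R) : Set R := {r | ρ.w r ≤ ρ.w 1}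

def M (ρ : NearWeight F R) : Set R := {r | ρ.w 1 < ρ.w r}

def nval (ρ : NearWeight F R) (f : R) : ℕ := WithBot.unbotD 0 (ρ.w f)

def Hset (ρ σ : NearWeight F R) (S : Set R) : Set (ℕ × ℕ) :=
  {p | ∃ f ∈ S, f ≠ 0 ∧ (ρ.nval f, σ.nval f) = p}

def WellAgreeing (ρ σ : NearWeight F R) : Prop :=
  (Hset ρ σ Set.univ)ᶜ.Finite ∧ ρ.U ∩ σ.U = Set.range (algebraMap F R)

noncomputable def xH (ρ σ : NearWeight F R) (n : ℕ) : ℕ :=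
  sInf {m | (m, n) ∈ Hset ρ σ Set.univ}

noncomputable def yH (ρ σ : NearWeight F R) (n : ℕ) : ℕ :=
  sInf {m | (n, m) ∈ Hset ρ σ Set.univ}

def lub (a b : ℕ × ℕ) : ℕ × ℕ := (max a.1 b.1, max a.2 b.2)

noncomputable def Gamma (ρ σ : NearWeight F R) : Set (ℕ × ℕ) :=
  {p | ∃ m : ℕ, p = (m, yH ρ σ m)} ∪ {p | ∃ n : ℕ, p = (xH ρ σ n, n)}

def Hbarx (ρ σ : NearWeight F R) : Set ℕ := {m | (m, 0) ∈ Hset ρ σ Set.univ}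

def Hbary (ρ σ : NearWeight F R) : Set ℕ := {n | (0, n) ∈ Hset ρ σ Set.univ}

noncomputable def GammaTilde (ρ σ : NearWeight F R) : Set (ℕ × ℕ) :=
  {p | ∃ m : ℕ, m ∉ Hbarx ρ σ ∧ p = (m, yH ρ σ m)}

def Delta (p : ℕ × ℕ) : Set (ℕ × ℕ) :=
  {q | (q.1 = p.1 ∧ q.2 < p.2) ∨ (q.2 = p.2 ∧ q.1 < p.1)}

noncomputable def tw (ρ : NearWeight F R) (f : R) : ℤ :=
  sInf {z : ℤ | ∃ g ∈ ρ.M, z = (ρ.nval (f * g) : ℤ) - (ρ.nval g : ℤ)}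

end NearWeight

/-!
Fix nonzero `a, b ∈ R`. The elements whose `ρ`- and `σ`-weights are at most `A` and `B` form an
`F`-space of dimension at most `A + B + 1`: by (N4) lowering one of the bounds by one loses at
most one dimension, and the weight bound `(0, 0)` leaves only `U_ρ ∩ U_σ = F`. The monomials
`a ^ i * b ^ j` with `i, j ≤ N` lie in such a space with `A + B` linear in `N`, so for large `N`
they are linearly dependent: any two nonzero elements of `R` are algebraically dependent over `F`.

Cofiniteness of `H` provides `f` of positive `ρ`- and `σ`-weight. Such an `f` is transcendental
(the leading power dominates every polynomial in `f`), hence a transcendence basis of `R`, and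
of its fraction field. It is not a unit, since its inverse would lie in `U_ρ ∩ U_σ = F`, so `R`
is not a field. If `a` lies in a nonzero ideal `I`, stripping the powers of `a` from a relation
between `a` and `b` leaves a nonzero polynomial over `F` killing `b` modulo `I`; so `R ⧸ I` is
algebraic over `F`, and every nonzero prime is maximal.
-/

section

open Polynomial

variable {F R : Type*} [Field F] [CommRing R] [Algebra F R]

theorem isAlgebraic_adjoin_of_eval₂_eq_zero {f r : R} (hf : Transcendental F f) {q : F[X][X]}
    (hq : q ≠ 0) (hqr : q.eval₂ (aeval f).toRingHom r = 0) :
    IsAlgebraic (Algebra.adjoin F {f}) r := by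
  let φ := algEquivOfTranscendental F f hf
  have hφ : (algebraMap (Algebra.adjoin F {f}) R).comp (φ : F[X] →+* Algebra.adjoin F {f}) =
      (aeval f).toRingHom := by
    ext <;> simp [φ]
  refine ⟨q.map (φ : F[X] →+* Algebra.adjoin F {f}),
    (Polynomial.map_ne_zero_iff φ.injective).mpr hq, ?_⟩
  rw [aeval_def, eval₂_map, hφ, hqr]

theorem isAlgebraic_mk_of_eval₂_eq_zero [IsDomain R] {I : Ideal R} {a b : R} (ha : a ∈ I)
    (ha0 : a ≠ 0) {q : F[X][X]} (hq : q ≠ 0) (hqa : q.eval₂ (aeval b).toRingHom a = 0) :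
    IsAlgebraic F (Ideal.Quotient.mk I b) := by
  obtain ⟨g, hqg, hXg⟩ := exists_eq_pow_rootMultiplicity_mul_and_not_dvd q hq 0
  rw [C_0, sub_zero, X_dvd_iff] at hXg
  rw [hqg, C_0, sub_zero, eval₂_mul, eval₂_pow, eval₂_X] at hqa
  have hga := congr_arg (Ideal.Quotient.mk I)
    ((mul_eq_zero.mp hqa).resolve_left (pow_ne_zero _ ha0))
  rw [hom_eval₂, Ideal.Quotient.eq_zero_iff_mem.mpr ha, eval₂_at_zero, map_zero] at hga
  refine ⟨g.coeff 0, hXg, ?_⟩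
  rw [← Ideal.Quotient.mkₐ_eq_mk F, aeval_algHom_apply]
  exact hga

theorem ringKrullDim_eq_one_of_dimensionLEOne {A : Type*} [CommRing A] [IsDomain A]
    [Ring.DimensionLEOne A] (h : ¬ IsField A) : ringKrullDim A = 1 := by
  have hle : ringKrullDim A ≤ 1 := by exact_mod_cast Ring.krullDimLE_iff.mp inferInstance
  refine hle.antisymm (not_lt.mp fun hlt => h ?_)
  have : Ring.KrullDimLE 0 A := Ring.krullDimLE_iff.mpr (by exact_mod_cast Order.le_of_lt_succ hlt)
  exact Ring.KrullDimLE.isField_of_isDomain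

end

namespace NearWeight

open Polynomial

variable {F R : Type*} [Field F] [CommRing R] [Algebra F R] (ρ : NearWeight F R)

theorem w_zero : ρ.w 0 = ⊥ := (ρ.N0 0).2 rfl

theorem w_one [Nontrivial R] : ρ.w 1 = 0 := ρ.norm0 1 one_ne_zero le_rfl

theorem w_neg (f : R) : ρ.w (-f) = ρ.w f := by
  simpa using ρ.N1 (-1) f (by simp)

theorem w_sub_le (f g : R) : ρ.w (f - g) ≤ max (ρ.w f) (ρ.w g) := by
  simpa [sub_eq_add_neg, w_neg] using ρ.N2 f (-g)

theorem w_add_eq_left_of_lt {f g : R} (h : ρ.w g < ρ.w f) : ρ.w (f + g) = ρ.w f := by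
  refine le_antisymm ((ρ.N2 f g).trans (max_eq_left h.le).le) ?_
  have := ρ.w_sub_le (f + g) g
  rw [add_sub_cancel_right] at this
  exact (le_max_iff.mp this).resolve_right h.not_ge

theorem w_smul_le (c : F) (f : R) : ρ.w (c • f) ≤ ρ.w f := by
  rcases eq_or_ne c 0 with rfl | hc
  · simp [w_zero]
  · exact (ρ.N1 c f hc).le

theorem exists_w_eq_coe {f : R} (hf : f ≠ 0) : ∃ k : ℕ, ρ.w f = k := by
  obtain ⟨k, hk⟩ := WithBot.ne_bot_iff_exists.mp fun h => hf ((ρ.N0 f).1 h)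
  exact ⟨k, hk.symm⟩

theorem w_eq_nval {f : R} (hf : f ≠ 0) : ρ.w f = ρ.nval f := by
  obtain ⟨k, hk⟩ := ρ.exists_w_eq_coe hf
  simp [nval, hk]

theorem ne_zero_of_mem_M {f : R} (hf : f ∈ ρ.M) : f ≠ 0 := by
  rintro rfl
  simp [M, w_zero] at hf

theorem mul_mem_M [Nontrivial R] {f g : R} (hf : f ∈ ρ.M) (hg : g ∈ ρ.M) : f * g ∈ ρ.M := by
  simp only [M, Set.mem_ofPred_eq, ρ.N5' f g hf hg, w_one] at hf hg ⊢
  exact hg.trans_le (le_add_of_nonneg_left hf.le)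

theorem pow_mem_M [Nontrivial R] {f : R} (hf : f ∈ ρ.M) {n : ℕ} (hn : n ≠ 0) : f ^ n ∈ ρ.M := by
  induction n with
  | zero => exact absurd rfl hn
  | succ n ih =>
    rcases eq_or_ne n 0 with rfl | hn'
    · simpa using hf
    · exact pow_succ f n ▸ ρ.mul_mem_M (ih hn') hf

theorem w_pow [Nontrivial R] {f : R} (hf : f ∈ ρ.M) (n : ℕ) : ρ.w (f ^ n) = n • ρ.w f := by
  induction n with
  | zero => simp [w_one]
  | succ n ih =>
    rcases eq_or_ne n 0 with rfl | hn
    · simp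
    · rw [pow_succ, ρ.N5' _ _ (ρ.pow_mem_M hf hn) hf, ih, succ_nsmul]

theorem w_pow_le [Nontrivial R] (f : R) (n : ℕ) : ρ.w (f ^ n) ≤ n • ρ.w f := by
  induction n with
  | zero => simp [w_one]
  | succ n ih =>
    rw [pow_succ, succ_nsmul]
    exact (ρ.N5 _ _).trans (add_le_add_left ih _)

theorem w_sum_lt {ι : Type*} (s : Finset ι) (g : ι → R) {C : WithBot ℕ} (hC : ⊥ < C)
    (h : ∀ i ∈ s, ρ.w (g i) < C) : ρ.w (∑ i ∈ s, g i) < C :=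
  Finset.sum_induction g (fun x => ρ.w x < C)
    (fun _ _ ha hb => (ρ.N2 _ _).trans_lt (max_lt ha hb)) (by rwa [w_zero]) h

theorem w_aeval [Nontrivial R] {f : R} (hf : f ∈ ρ.M) {p : F[X]} (hp : p ≠ 0) :
    ρ.w (aeval f p) = p.natDegree • ρ.w f := by
  obtain ⟨k, hk⟩ := ρ.exists_w_eq_coe (ρ.ne_zero_of_mem_M hf)
  have hk0 : 0 < k := by simpa [M, w_one, hk] using hf
  have hlead : ρ.w (p.coeff p.natDegree • f ^ p.natDegree) = p.natDegree • ρ.w f := by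
    rw [ρ.N1 _ _ (show p.coeff _ ≠ 0 from leadingCoeff_ne_zero.mpr hp), ρ.w_pow hf]
  have hlower : ρ.w (∑ i ∈ Finset.range p.natDegree, p.coeff i • f ^ i) < p.natDegree • ρ.w f := by
    rw [hk, nsmul_eq_mul]
    refine ρ.w_sum_lt _ _ (by exact_mod_cast WithBot.bot_lt_coe _) fun i hi => ?_
    refine (ρ.w_smul_le _ _).trans_lt ?_
    rw [ρ.w_pow hf, hk, nsmul_eq_mul]
    exact_mod_cast Nat.mul_lt_mul_of_pos_right (Finset.mem_range.mp hi) hk0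
  rw [aeval_eq_sum_range, Finset.sum_range_succ, add_comm,
    ρ.w_add_eq_left_of_lt (hlead ▸ hlower), hlead]

theorem transcendental_of_mem_M [Nontrivial R] {f : R} (hf : f ∈ ρ.M) : Transcendental F f := by
  rintro ⟨p, hp, hpf⟩
  have := ρ.w_aeval hf hp
  obtain ⟨k, hk⟩ := ρ.exists_w_eq_coe (ρ.ne_zero_of_mem_M hf)
  rw [hpf, w_zero, hk, nsmul_eq_mul] at this
  exact WithBot.bot_ne_coe (by exact_mod_cast this)

variable (σ : NearWeight F R)

def weightSpace (A B : ℕ) : Submodule F R where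
  carrier := {g | ρ.w g ≤ A ∧ σ.w g ≤ B}
  add_mem' ha hb := ⟨(ρ.N2 _ _).trans (max_le ha.1 hb.1), (σ.N2 _ _).trans (max_le ha.2 hb.2)⟩
  zero_mem' := by simp [w_zero]
  smul_mem' c _ hx := ⟨(ρ.w_smul_le c _).trans hx.1, (σ.w_smul_le c _).trans hx.2⟩

theorem mem_weightSpace {A B : ℕ} {g : R} : g ∈ weightSpace ρ σ A B ↔ ρ.w g ≤ A ∧ σ.w g ≤ B :=
  Iff.rfl

theorem weightSpace_comm (A B : ℕ) : weightSpace σ ρ B A = weightSpace ρ σ A B := by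
  ext
  exact and_comm

theorem exists_weightSpace_succ_le_sup_span [Nontrivial R] (A B : ℕ) :
    ∃ f : R, weightSpace ρ σ (A + 1) B ≤ weightSpace ρ σ A B ⊔ Submodule.span F {f} := by
  by_cases hex : ∃ f ∈ weightSpace ρ σ (A + 1) B, ρ.w f = (A + 1 : ℕ)
  · obtain ⟨f, hfV, hf⟩ := hex
    refine ⟨f, fun g hg => ?_⟩
    rcases hg.1.lt_or_eq with hlt | hg1
    · exact Submodule.mem_sup_left ⟨Order.le_of_lt_succ hlt, hg.2⟩
    have hpos : ρ.w 1 < ((A + 1 : ℕ) : WithBot ℕ) := by rw [w_one]; exact_mod_cast A.succ_pos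
    obtain ⟨c, hc, hlt⟩ := ρ.N4 g f (hg1 ▸ hpos) (hf ▸ hpos) (hg1.trans hf.symm)
    refine Submodule.mem_sup.mpr ⟨g - c • f, ⟨Order.le_of_lt_succ (hlt.trans_eq hg1), ?_⟩,
      c • f, Submodule.smul_mem _ c (Submodule.mem_span_singleton_self f), sub_add_cancel g _⟩
    exact (σ.w_sub_le _ _).trans (max_le hg.2 ((σ.N1 c f hc).le.trans hfV.2))
  · refine ⟨0, fun g hg => Submodule.mem_sup_left ⟨?_, hg.2⟩⟩
    exact Order.le_of_lt_succ (hg.1.lt_of_ne fun h => hex ⟨g, hg, h⟩)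

theorem rank_weightSpace_succ_le [Nontrivial R] (A B : ℕ) :
    Module.rank F (weightSpace ρ σ (A + 1) B) ≤ Module.rank F (weightSpace ρ σ A B) + 1 := by
  obtain ⟨f, hf⟩ := exists_weightSpace_succ_le_sup_span ρ σ A B
  calc Module.rank F (weightSpace ρ σ (A + 1) B)
      ≤ Module.rank F ↥(weightSpace ρ σ A B ⊔ Submodule.span F {f}) := Submodule.rank_mono hf
    _ ≤ Module.rank F (weightSpace ρ σ A B) + Module.rank F (Submodule.span F {f}) :=
        Submodule.rank_add_le_rank_add_rank _ _
    _ ≤ Module.rank F (weightSpace ρ σ A B) + 1 := by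
        gcongr
        simpa using rank_span_le (R := F) {f}

theorem rank_weightSpace_le_rank_zero_add [Nontrivial R] (A B : ℕ) :
    Module.rank F (weightSpace ρ σ A B) ≤ Module.rank F (weightSpace ρ σ 0 B) + A := by
  induction A with
  | zero => simp
  | succ A ih =>
    calc Module.rank F (weightSpace ρ σ (A + 1) B) ≤ Module.rank F (weightSpace ρ σ A B) + 1 :=
          rank_weightSpace_succ_le ρ σ A B
      _ ≤ Module.rank F (weightSpace ρ σ 0 B) + A + 1 := by gcongr
      _ = Module.rank F (weightSpace ρ σ 0 B) + ↑(A + 1) := by push_cast; ring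

theorem weightSpace_zero_zero [Nontrivial R] (hU : ρ.U ∩ σ.U = Set.range (algebraMap F R)) :
    weightSpace ρ σ 0 0 ≤ Submodule.span F {1} := by
  intro g hg
  have hgU : g ∈ ρ.U ∩ σ.U := by simpa [U, w_one, mem_weightSpace] using hg
  rw [hU] at hgU
  obtain ⟨c, rfl⟩ := hgU
  exact Submodule.mem_span_singleton.mpr ⟨c, (Algebra.algebraMap_eq_smul_one c).symm⟩

theorem rank_weightSpace_le [Nontrivial R] (hU : ρ.U ∩ σ.U = Set.range (algebraMap F R))
    (A B : ℕ) : Module.rank F (weightSpace ρ σ A B) ≤ A + B + 1 := by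
  have h00 : Module.rank F (weightSpace σ ρ 0 0) ≤ 1 := by
    refine (Submodule.rank_mono (weightSpace_zero_zero σ ρ (Set.inter_comm _ _ ▸ hU))).trans ?_
    simpa using rank_span_le (R := F) {(1 : R)}
  calc Module.rank F (weightSpace ρ σ A B)
      ≤ Module.rank F (weightSpace σ ρ B 0) + A := by
        rw [weightSpace_comm ρ σ 0 B]; exact rank_weightSpace_le_rank_zero_add ρ σ A B
    _ ≤ Module.rank F (weightSpace σ ρ 0 0) + B + A := by
        gcongr; exact rank_weightSpace_le_rank_zero_add σ ρ B 0
    _ ≤ 1 + B + A := by gcongr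
    _ = A + B + 1 := by ring

theorem w_pow_mul_pow_le [Nontrivial R] {a b : R} (ha : a ≠ 0) (hb : b ≠ 0) {i j N : ℕ}
    (hi : i ≤ N) (hj : j ≤ N) : ρ.w (a ^ i * b ^ j) ≤ (N * (ρ.nval a + ρ.nval b) : ℕ) := by
  calc ρ.w (a ^ i * b ^ j) ≤ i • ρ.w a + j • ρ.w b :=
        (ρ.N5 _ _).trans (add_le_add (ρ.w_pow_le a i) (ρ.w_pow_le b j))
    _ = (i * ρ.nval a + j * ρ.nval b : ℕ) := by
        rw [ρ.w_eq_nval ha, ρ.w_eq_nval hb]; push_cast; simp only [nsmul_eq_mul]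
    _ ≤ (N * (ρ.nval a + ρ.nval b) : ℕ) := by
        gcongr ((?_ : ℕ) : WithBot ℕ)
        nlinarith

theorem exists_eval₂_eq_zero [Nontrivial R] (hU : ρ.U ∩ σ.U = Set.range (algebraMap F R))
    {a b : R} (ha : a ≠ 0) (hb : b ≠ 0) :
    ∃ q : F[X][X], q ≠ 0 ∧ q.eval₂ (aeval a).toRingHom b = 0 := by
  set s := ρ.nval a + ρ.nval b + σ.nval a + σ.nval b
  -- `(N + 1) ^ 2` monomials in a space of dimension at most `N * s + 1`
  set N := s + 1
  let v : Fin (N + 1) × Fin (N + 1) → R := fun p => a ^ (p.1 : ℕ) * b ^ (p.2 : ℕ)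
  have hv : Submodule.span F (Set.range v) ≤
      weightSpace ρ σ (N * (ρ.nval a + ρ.nval b)) (N * (σ.nval a + σ.nval b)) :=
    Submodule.span_le.mpr <| Set.range_subset_iff.mpr fun p =>
      ⟨ρ.w_pow_mul_pow_le ha hb p.1.is_le p.2.is_le, σ.w_pow_mul_pow_le ha hb p.1.is_le p.2.is_le⟩
  have hdep : ¬ LinearIndependent F v := by
    intro hli
    have h := Cardinal.lift_le.{0}.mpr <| (rank_span hli).symm.trans_le
      ((Submodule.rank_mono hv).trans (rank_weightSpace_le ρ σ hU _ _))
    rw [Cardinal.mk_range_eq_of_injective hli.injective] at h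
    simp only [Cardinal.mk_fintype, Fintype.card_prod, Fintype.card_fin, Cardinal.lift_natCast,
      Cardinal.lift_add, Cardinal.lift_one] at h
    have h' : (N + 1) * (N + 1) ≤ N * (ρ.nval a + ρ.nval b) + N * (σ.nval a + σ.nval b) + 1 := by
      exact_mod_cast h
    have hs : N * (ρ.nval a + ρ.nval b) + N * (σ.nval a + σ.nval b) = N * s := by ring
    have hN : N = s + 1 := rfl
    nlinarith
  obtain ⟨g, hg, p₀, hp₀⟩ := Fintype.not_linearIndependent_iff.mp hdep
  refine ⟨∑ p, monomial (p.2 : ℕ) (monomial (p.1 : ℕ) (g p)), fun hq => hp₀ ?_, ?_⟩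
  · have := congr_arg (fun q => (q.coeff p₀.2).coeff p₀.1) hq
    simpa [finsetSum_coeff, coeff_monomial, Fintype.sum_prod_type, Fin.val_inj] using this
  · simpa [eval₂_finsetSum, Algebra.smul_def, mul_assoc, v] using hg

theorem isAlgebraic_quotient [IsDomain R] (hU : ρ.U ∩ σ.U = Set.range (algebraMap F R))
    {I : Ideal R} (hI : I ≠ ⊥) : Algebra.IsAlgebraic F (R ⧸ I) := by
  obtain ⟨a, ha, ha0⟩ := Submodule.exists_mem_ne_zero_of_ne_bot hI
  refine ⟨fun x => ?_⟩
  obtain ⟨b, rfl⟩ := Ideal.Quotient.mk_surjective x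
  rcases eq_or_ne b 0 with rfl | hb
  · rw [map_zero]
    exact isAlgebraic_zero
  obtain ⟨q, hq, hqa⟩ := exists_eval₂_eq_zero ρ σ hU hb ha0
  exact isAlgebraic_mk_of_eval₂_eq_zero ha ha0 hq hqa

theorem dimensionLEOne [IsDomain R] (hU : ρ.U ∩ σ.U = Set.range (algebraMap F R)) :
    Ring.DimensionLEOne R where
  maximalOfPrime {p} hp0 hp := by
    have := isAlgebraic_quotient ρ σ hU hp0
    exact Ideal.Quotient.maximal_of_isField p
      (isField_of_isIntegral_of_isField' (Field.toIsField F))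

theorem mem_U_of_mul_eq_one [Nontrivial R] {f g : R} (hf : f ∈ ρ.M) (hfg : f * g = 1) :
    g ∈ ρ.U := by
  by_contra hg
  have h1 := ρ.mul_mem_M hf (show ρ.w 1 < ρ.w g from not_le.mp hg)
  rw [hfg] at h1
  exact lt_irrefl (ρ.w 1) h1

theorem not_isField [Nontrivial R] (hU : ρ.U ∩ σ.U = Set.range (algebraMap F R)) {f : R}
    (hρ : f ∈ ρ.M) (hσ : f ∈ σ.M) : ¬ IsField R := by
  intro hR
  obtain ⟨g, hfg⟩ := hR.mul_inv_cancel (ρ.ne_zero_of_mem_M hρ)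
  obtain ⟨c, rfl⟩ : g ∈ Set.range (algebraMap F R) :=
    hU ▸ ⟨ρ.mem_U_of_mul_eq_one hρ hfg, σ.mem_U_of_mul_eq_one hσ hfg⟩
  have hc : c ≠ 0 := by
    rintro rfl
    simp at hfg
  rw [mul_comm, ← Algebra.smul_def] at hfg
  rw [M, Set.mem_ofPred_eq, ← ρ.N1 c f hc, hfg] at hρ
  exact lt_irrefl _ hρ

theorem isTranscendenceBasis_of_mem_M [Nontrivial R]
    (hU : ρ.U ∩ σ.U = Set.range (algebraMap F R)) {f : R} (hf : f ∈ ρ.M) :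
    IsTranscendenceBasis F (fun _ : Unit => f) := by
  have hf_tr := ρ.transcendental_of_mem_M hf
  refine (algebraicIndependent_unique_type_iff.mpr hf_tr).isTranscendenceBasis_iff_isAlgebraic.mpr
    ⟨fun r => ?_⟩
  rw [Set.range_const]
  rcases eq_or_ne r 0 with rfl | hr
  · exact isAlgebraic_zero
  obtain ⟨q, hq, hqr⟩ := exists_eval₂_eq_zero ρ σ hU (ρ.ne_zero_of_mem_M hf) hr
  exact isAlgebraic_adjoin_of_eval₂_eq_zero hf_tr hq hqr

theorem exists_mem_M_and_mem_M [Nontrivial R] (hfin : (Hset ρ σ Set.univ)ᶜ.Finite) :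
    ∃ f : R, f ∈ ρ.M ∧ f ∈ σ.M := by
  have hdiag : (Set.range fun n : ℕ => (n + 1, n + 1)).Infinite :=
    Set.infinite_range_of_injective fun m n h => by simpa using h
  obtain ⟨_, ⟨n, rfl⟩, hn⟩ := hdiag.exists_notMem_finite hfin
  obtain ⟨f, -, hf0, hfn⟩ := not_not.mp hn
  simp only [Prod.mk.injEq] at hfn
  refine ⟨f, ?_, ?_⟩ <;>
  · simp only [M, Set.mem_ofPred_eq, w_one, w_eq_nval _ hf0, hfn]
    exact_mod_cast n.succ_pos

end NearWeight

variable {F R : Type*} [Field F] [CommRing R] [Algebra F R]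

theorem stmt15_general [IsDomain R]
    (ρ σ : NearWeight F R) (hwa : NearWeight.WellAgreeing ρ σ) :
    (∃ x : FractionRing R, IsTranscendenceBasis F (fun _ : Unit => x)) ∧
    ringKrullDim R = 1 := by
  obtain ⟨hfin, hU⟩ := hwa
  obtain ⟨f, hρ, hσ⟩ := ρ.exists_mem_M_and_mem_M σ hfin
  have := IsLocalization.isAlgebraic (FractionRing R) (nonZeroDivisors R)
  refine ⟨⟨algebraMap R _ f, (ρ.isTranscendenceBasis_of_mem_M σ hU hρ).algebraMap_comp⟩, ?_⟩
  have := ρ.dimensionLEOne σ hU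
  exact ringKrullDim_eq_one_of_dimensionLEOne (ρ.not_isField σ hU hρ hσ)

theorem stmt15 [IsDomain R]
    (hinj : Function.Injective (algebraMap F R))
    (hsur : ¬ Function.Surjective (algebraMap F R))
    (ρ σ : NearWeight F R) (hwa : NearWeight.WellAgreeing ρ σ) :
    (∃ x : FractionRing R, IsTranscendenceBasis F (fun _ : Unit => x)) ∧
    ringKrullDim R = 1 :=
  stmt15_general ρ σ hwa
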